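/- (Affine Farkas' lemma, strengthened version.) Let n, N ∈ ℕ and for j ∈ {1,…,N} let φ_j(x) = c^j_0 + c^j_1·x_1 + … + c^j_n·x_n be affine expressions over real variables x_1,…,x_n, and let φ(x) = c_0 + c_1·x_1 + … + c_n·x_n be a further affine expression. Suppose the system Φ = {φ_1 ≥ 0, …, φ_N ≥ 0} is satisfiable, i.e., there exists x ∈ ℝ^n with φ_j(x) ≥ 0 for all j. Then the entailment (for all x ∈ ℝ^n, if φ_j(x) ≥ 0 for all j then φ(x) ≥ 0) holds if and only if there exist nonnegative reals y_1,…,y_N such that c_i = Σ_{j=1}^N y_j·c^j_i for every i ∈ {1,…,n} and c_0 ≥ Σ_{j=1}^N y_j·c^j_0. -/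

import Mathlib

open Finset

open scoped RealInnerProductSpace


-- conic Caratheodory
lemma cone_carath {E : Type*} [AddCommGroup E] [Module ℝ E] {ι : Type*} [Fintype ι]
    [DecidableEq ι] (u : ι → E) (s : Finset ι) (y : ι → ℝ) (hy : ∀ j, 0 ≤ y j)
    (hsupp : ∀ j ∉ s, y j = 0) :
    ∃ t : Finset ι, LinearIndependent ℝ (fun j : t => u j) ∧
      ∃ z : ι → ℝ, (∀ j, 0 ≤ z j) ∧ (∀ j ∉ t, z j = 0) ∧
        ∑ j, z j • u j = ∑ j, y j • u j := by
  induction s using Finset.strongInduction generalizing y with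
  | _ s ih =>
  by_cases hli : LinearIndependent ℝ (fun j : s => u j)
  · exact ⟨s, hli, y, hy, hsupp, rfl⟩
  rw [Fintype.not_linearIndependent_iff] at hli
  obtain ⟨g, hg0, i0, hi0⟩ := hli
  have key : ∀ g : ι → ℝ, (∑ j, g j • u j = 0) → (∀ j ∉ s, g j = 0) →
      (∃ j ∈ s, 0 < g j) →
      (∃ t : Finset ι, LinearIndependent ℝ (fun j : t => u j) ∧
        ∃ z : ι → ℝ, (∀ j, 0 ≤ z j) ∧ (∀ j ∉ t, z j = 0) ∧
          ∑ j, z j • u j = ∑ j, y j • u j) := by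
    rintro g hg0 hgs ⟨j1, hj1s, hj1pos⟩
    set A := s.filter (fun j => 0 < g j) with hA
    obtain ⟨j0, hj0A, hmin⟩ :=
      A.exists_min_image (fun j => y j / g j) ⟨j1, mem_filter.2 ⟨hj1s, hj1pos⟩⟩
    have hj0s : j0 ∈ s := (mem_filter.1 hj0A).1
    have hgj0 : 0 < g j0 := (mem_filter.1 hj0A).2
    set lam := y j0 / g j0 with hlam
    have hlam0 : 0 ≤ lam := div_nonneg (hy j0) hgj0.le
    set z := fun j => y j - lam * g j with hzdef
    have hz0 : ∀ j, 0 ≤ z j := by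
      intro j
      by_cases hgj : 0 < g j
      · have hjs : j ∈ s := by
          by_contra h; exact absurd (hgs j h) (ne_of_gt hgj)
        have h1 : lam ≤ y j / g j := hmin j (mem_filter.2 ⟨hjs, hgj⟩)
        have h2 : lam * g j ≤ y j := (le_div_iff₀ hgj).mp h1
        simp only [hzdef]; linarith
      · have h2 : lam * g j ≤ 0 :=
          mul_nonpos_of_nonneg_of_nonpos hlam0 (le_of_not_gt hgj)
        have := hy j
        simp only [hzdef]; linarith
    have hzj0 : z j0 = 0 := by
      simp only [hzdef, hlam]
      field_simp
      ring
    have hzs : ∀ j ∉ s.erase j0, z j = 0 := by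
      intro j hj
      by_cases hjj : j = j0
      · rw [hjj]; exact hzj0
      · have hjs : j ∉ s := fun h => hj (Finset.mem_erase.2 ⟨hjj, h⟩)
        simp only [hzdef, hsupp j hjs, hgs j hjs, mul_zero, sub_zero]
    have hsum : ∑ j, z j • u j = ∑ j, y j • u j := by
      simp only [hzdef, sub_smul, mul_smul]
      rw [Finset.sum_sub_distrib, ← Finset.smul_sum, hg0, smul_zero, sub_zero]
    obtain ⟨t, hlit, z', hz', hz's, hz'sum⟩ :=
      ih (s.erase j0) (Finset.erase_ssubset hj0s) z hz0 hzs
    exact ⟨t, hlit, z', hz', hz's, by rw [hz'sum, hsum]⟩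
  set gg : ι → ℝ := fun j => if h : j ∈ s then g ⟨j, h⟩ else 0 with hggdef
  have hggs : ∀ j ∉ s, gg j = 0 := fun j hj => dif_neg hj
  have hgg0 : ∑ j, gg j • u j = 0 := by
    rw [← Finset.sum_subset (Finset.subset_univ s)
      (fun x _ hx => by rw [hggs x hx, zero_smul])]
    rw [← Finset.sum_attach s (fun j => gg j • u j)]
    rw [← hg0]
    exact Finset.sum_congr rfl fun j _ => by rw [hggdef]; simp [j.2]
  have hggi0 : gg ↑i0 ≠ 0 := by
    simpa [hggdef, i0.2] using hi0
  by_cases hpos : ∃ j ∈ s, 0 < gg j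
  · exact key gg hgg0 hggs hpos
  · push_neg at hpos
    refine key (-gg) (by simp [hgg0]) (fun j hj => by simp [hggs j hj]) ⟨i0, i0.2, ?_⟩
    have := hpos i0 i0.2
    simp only [Pi.neg_apply, neg_pos]
    exact lt_of_le_of_ne this hggi0

lemma cone_closed {E : Type*} [NormedAddCommGroup E] [NormedSpace ℝ E] {ι : Type*}
    [Fintype ι] [DecidableEq ι] (u : ι → E) :
    IsClosed {x : E | ∃ y : ι → ℝ, (∀ j, 0 ≤ y j) ∧ x = ∑ j, y j • u j} := by
  have hrw : {x : E | ∃ y : ι → ℝ, (∀ j, 0 ≤ y j) ∧ x = ∑ j, y j • u j} =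
      ⋃ (t : Finset ι) (_ : LinearIndependent ℝ (fun j : t => u j)),
        (fun z : t → ℝ => ∑ j, z j • u (j : ι)) '' {z | ∀ j, 0 ≤ z j} := by
    ext x
    simp only [Set.mem_setOf_eq, Set.mem_iUnion, Set.mem_image]
    constructor
    · rintro ⟨y, hy, rfl⟩
      obtain ⟨t, hli, z, hz, hzs, hzsum⟩ := cone_carath u Finset.univ y hy (by simp)
      refine ⟨t, hli, fun j => z j, fun j => hz j, ?_⟩
      rw [← hzsum]
      rw [← Finset.sum_subset (Finset.subset_univ t)
        (fun x _ hx => by rw [hzs x hx, zero_smul])]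
      exact (Finset.sum_attach t (fun j => z j • u j))
    · rintro ⟨t, hli, z, hz, rfl⟩
      refine ⟨fun j => if h : j ∈ t then z ⟨j, h⟩ else 0,
        fun j => by by_cases h : j ∈ t <;> simp [h, hz], ?_⟩
      rw [← Finset.sum_subset (Finset.subset_univ t)
        (fun x _ hx => by simp [hx])]
      rw [← Finset.sum_attach t
        (fun j => (if h : j ∈ t then z ⟨j, h⟩ else 0) • u j)]
      exact (Finset.sum_congr rfl fun j _ => by simp [j.2]).symm
  rw [hrw]
  refine isClosed_iUnion_of_finite fun t => isClosed_iUnion_of_finite fun hli => ?_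
  have horth : IsClosed {z : t → ℝ | ∀ j, 0 ≤ z j} := by
    have : {z : t → ℝ | ∀ j, 0 ≤ z j} = ⋂ j, {z : t → ℝ | 0 ≤ z j} := by
      ext z; simp
    rw [this]
    exact isClosed_iInter fun j => isClosed_le continuous_const (continuous_apply j)
  let f : (t → ℝ) →ₗ[ℝ] E :=
    { toFun := fun z => ∑ j, z j • u (j : ι)
      map_add' := fun a b => by simp [add_smul, Finset.sum_add_distrib]
      map_smul' := fun c a => by simp [smul_smul, Finset.smul_sum] }
  have hker : LinearMap.ker f = ⊥ := by
    rw [LinearMap.ker_eq_bot']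
    intro z hz
    exact funext (Fintype.linearIndependent_iff.1 hli z hz)
  exact (f.isClosedEmbedding_of_injective hker).isClosedMap _ horth

lemma cone_separation {m : ℕ} {ι : Type*} [Fintype ι] [DecidableEq ι]
    (u : ι → EuclideanSpace ℝ (Fin m)) (b : EuclideanSpace ℝ (Fin m))
    (hb : ¬ ∃ y : ι → ℝ, (∀ j, 0 ≤ y j) ∧ b = ∑ j, y j • u j) :
    ∃ z : EuclideanSpace ℝ (Fin m), (∀ j, 0 ≤ ⟪u j, z⟫) ∧ ⟪z, b⟫ < 0 := by
  set C : ConvexCone ℝ (EuclideanSpace ℝ (Fin m)) :=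
    { carrier := {x | ∃ y : ι → ℝ, (∀ j, 0 ≤ y j) ∧ x = ∑ j, y j • u j}
      smul_mem' := by
        rintro c hc x ⟨y, hy, rfl⟩
        exact ⟨fun j => c * y j, fun j => mul_nonneg hc.le (hy j),
          by rw [Finset.smul_sum]; simp [mul_smul]⟩
      add_mem' := by
        rintro x ⟨y, hy, rfl⟩ x' ⟨y', hy', rfl⟩
        exact ⟨fun j => y j + y' j, fun j => add_nonneg (hy j) (hy' j),
          by simp [add_smul, Finset.sum_add_distrib]⟩ } with hC
  have hne : (C : Set (EuclideanSpace ℝ (Fin m))).Nonempty :=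
    ⟨0, ⟨fun _ => 0, fun j => le_refl 0, by simp⟩⟩
  obtain ⟨z, hz1, hz2⟩ : ∃ z : EuclideanSpace ℝ (Fin m),
      (∀ x ∈ (C : Set (EuclideanSpace ℝ (Fin m))), 0 ≤ ⟪x, z⟫) ∧ ⟪z, b⟫ < 0 := by
    obtain ⟨z, hz1, hz2⟩ := ProperCone.hyperplane_separation' (E := EuclideanSpace ℝ (Fin m))
      (x₀ := b) ⟨
        { carrier := (C : Set (EuclideanSpace ℝ (Fin m)))
          add_mem' := fun ha hb => C.add_mem ha hb
          zero_mem' := ⟨fun _ => 0, fun _ => le_refl 0, by simp⟩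
          smul_mem' := by
            rintro c x ⟨y, hy, rfl⟩
            exact ⟨fun j => c * y j, fun j => mul_nonneg c.2 (hy j),
              by rw [Finset.smul_sum]; simp [mul_smul, NNReal.smul_def]⟩ }, cone_closed u⟩ hb
    exact ⟨z, hz1, by rwa [real_inner_comm]⟩
  refine ⟨z, fun j => ?_, hz2⟩
  refine hz1 (u j) ⟨Pi.single j 1, ?_, ?_⟩
  · intro k
    rcases eq_or_ne k j with rfl | h
    · simp
    · simp [Pi.single_apply, h]
  · rw [Finset.sum_eq_single_of_mem j (Finset.mem_univ j)
      (fun k _ hk => by simp [Pi.single_apply, hk])]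
    simp

lemma pilp_sum_apply {m : ℕ} {ι : Type*} [Fintype ι]
    (f : ι → EuclideanSpace ℝ (Fin m)) (i : Fin m) :
    (∑ j, f j) i = ∑ j, f j i :=
  by rw [WithLp.ofLp_sum]; exact Finset.sum_apply i Finset.univ _

lemma euclid_inner {m : ℕ} (x z : EuclideanSpace ℝ (Fin m)) : ⟪x, z⟫ = ∑ i, x i * z i := by
  simp [PiLp.inner_apply, RCLike.inner_apply, conj_trivial]
  exact Finset.sum_congr rfl fun i _ => mul_comm _ _

/-- **affine Farkas' lemma, strengthened version.**
For affine expressions `φ_j(x) = c0 j + Σ_i c j i * x i` (`j ∈ {1,…,N}`) such that the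
system `{φ_j(x) ≥ 0}` is satisfiable, and a further affine expression
`φ(x) = d0 + Σ_i d i * x i`, the entailment `(∀ x, (∀ j, φ_j(x) ≥ 0) → φ(x) ≥ 0)` holds
iff there are nonnegative reals `y_j` with `d i = Σ_j y j * c j i` for every `i` and
`d0 ≥ Σ_j y j * c0 j`. -/
theorem affine_farkas (n N : ℕ) (c0 : Fin N → ℝ) (c : Fin N → Fin n → ℝ)
    (d0 : ℝ) (d : Fin n → ℝ)
    (hsat : ∃ x : Fin n → ℝ, ∀ j, 0 ≤ c0 j + ∑ i, c j i * x i) :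
    (∀ x : Fin n → ℝ, (∀ j, 0 ≤ c0 j + ∑ i, c j i * x i) → 0 ≤ d0 + ∑ i, d i * x i) ↔
    ∃ y : Fin N → ℝ, (∀ j, 0 ≤ y j) ∧
      (∀ i, d i = ∑ j, y j * c j i) ∧ (∑ j, y j * c0 j ≤ d0) := by
  constructor
  · intro hent
    set u : (Fin N ⊕ Unit) → EuclideanSpace ℝ (Fin (n + 1)) :=
      Sum.elim (fun j => WithLp.toLp 2 (fun i => Fin.cases (c0 j) (c j) i))
        (fun _ => WithLp.toLp 2 (fun i => Fin.cases 1 (fun _ => 0) i)) with hu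
    set b : EuclideanSpace ℝ (Fin (n + 1)) := WithLp.toLp 2 (fun i => Fin.cases d0 d i) with hbdef
    by_cases hmem : ∃ y : Fin N ⊕ Unit → ℝ, (∀ j, 0 ≤ y j) ∧ b = ∑ j, y j • u j
    · obtain ⟨y, hy, hb⟩ := hmem
      have hcoord : ∀ i : Fin (n + 1), b i = ∑ j, y j * u j i := by
        intro i
        rw [congrFun (congrArg WithLp.ofLp hb) i, pilp_sum_apply]
        rfl
      refine ⟨fun j => y (Sum.inl j), fun j => hy _, fun i => ?_, ?_⟩
      · have := hcoord i.succ
        simpa [hu, hbdef, Fintype.sum_sum_type] using this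
      · have := hcoord 0
        have h2 : 0 ≤ y (Sum.inr ()) := hy _
        simp only [hu, hbdef, Fintype.sum_sum_type, Fin.cases_zero, Sum.elim_inl,
          Sum.elim_inr, mul_one, Fintype.sum_unique, PiLp.toLp_apply] at this
        linarith
    · exfalso
      obtain ⟨z, hz1, hz2⟩ := cone_separation u b hmem
      have hz0 : 0 ≤ z 0 := by
        have := hz1 (Sum.inr ())
        rw [euclid_inner] at this
        simpa [hu, Fin.sum_univ_succ] using this
      have hz1' : ∀ j, 0 ≤ c0 j * z 0 + ∑ i, c j i * z i.succ := by
        intro j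
        have := hz1 (Sum.inl j)
        rw [euclid_inner] at this
        simpa [hu, Fin.sum_univ_succ] using this
      have hz2' : d0 * z 0 + ∑ i, d i * z i.succ < 0 := by
        rw [euclid_inner] at hz2
        have : ∑ i, z i * b i = d0 * z 0 + ∑ i, d i * z i.succ := by
          rw [Fin.sum_univ_succ]
          simp [hbdef, mul_comm]
        linarith [hz2, this.symm ▸ hz2]
      rcases hz0.lt_or_eq with hz0pos | hz0eq
      · -- z 0 > 0
        set x : Fin n → ℝ := fun i => z i.succ / z 0 with hx
        have hxc : ∀ j, 0 ≤ c0 j + ∑ i, c j i * x i := by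
          intro j
          have := div_nonneg (hz1' j) hz0pos.le
          rw [add_div, Finset.sum_div, mul_div_cancel_right₀ _ (ne_of_gt hz0pos)] at this
          simpa [hx, mul_div_assoc] using this
        have h2 := hent x hxc
        have h3 : 0 ≤ (d0 * z 0 + ∑ i, d i * z i.succ) / z 0 := by
          rw [add_div, Finset.sum_div, mul_div_cancel_right₀ _ (ne_of_gt hz0pos)]
          simpa [hx, mul_div_assoc] using h2
        have h4 := (le_div_iff₀ hz0pos).mp h3
        rw [zero_mul] at h4
        linarith
      · -- z 0 = 0
        obtain ⟨x0, hx0⟩ := hsat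
        set S := ∑ i, d i * z i.succ with hS
        have hSneg : S < 0 := by rw [hS]; rw [← hz0eq] at hz2'; linarith
        set A := d0 + ∑ i, d i * x0 i with hA
        have hA0 : 0 ≤ A := hent x0 hx0
        set t := (A + 1) / (-S) with ht
        have ht0 : 0 ≤ t := div_nonneg (by linarith) (by linarith)
        set x : Fin n → ℝ := fun i => x0 i + t * z i.succ with hx
        have hxc : ∀ j, 0 ≤ c0 j + ∑ i, c j i * x i := by
          intro j
          have hcj : 0 ≤ ∑ i, c j i * z i.succ := by
            have := hz1' j; rw [← hz0eq] at this; linarith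
          have hexp : c0 j + ∑ i, c j i * x i =
              (c0 j + ∑ i, c j i * x0 i) + t * ∑ i, c j i * z i.succ := by
            simp only [hx, mul_add, Finset.sum_add_distrib, Finset.mul_sum]
            ring_nf
            congr 1
            exact Finset.sum_congr rfl fun i _ => by ring
          rw [hexp]
          exact add_nonneg (hx0 j) (mul_nonneg ht0 hcj)
        have h2 := hent x hxc
        have hexp : d0 + ∑ i, d i * x i = A + t * S := by
          simp only [hx, hA, hS, mul_add, Finset.sum_add_distrib, Finset.mul_sum]
          ring_nf
          congr 1
          exact Finset.sum_congr rfl fun i _ => by ring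
        have hSne : S ≠ 0 := ne_of_lt hSneg
        have htS : t * S = -(A + 1) := by
          rw [ht, div_mul_eq_mul_div, mul_div_assoc, div_neg, div_self hSne, mul_neg,
            mul_one]
        rw [hexp, htS] at h2
        linarith
  · rintro ⟨y, hy, hd, hd0⟩ x hx
    have h1 : ∑ i, d i * x i = ∑ j, y j * ∑ i, c j i * x i := by
      calc ∑ i, d i * x i = ∑ i, ∑ j, y j * c j i * x i := by
            refine Finset.sum_congr rfl fun i _ => ?_
            rw [hd i, Finset.sum_mul]
        _ = ∑ j, ∑ i, y j * c j i * x i := Finset.sum_comm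
        _ = ∑ j, y j * ∑ i, c j i * x i := by
            refine Finset.sum_congr rfl fun j _ => ?_
            rw [Finset.mul_sum]
            exact Finset.sum_congr rfl fun i _ => by ring
    have h2 : 0 ≤ ∑ j, y j * (c0 j + ∑ i, c j i * x i) :=
      Finset.sum_nonneg fun j _ => mul_nonneg (hy j) (hx j)
    have h3 : ∑ j, y j * (c0 j + ∑ i, c j i * x i) =
        ∑ j, y j * c0 j + ∑ j, y j * ∑ i, c j i * x i := by
      simp only [mul_add, Finset.sum_add_distrib]
    linarith
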